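/- For all integers ℓ ≥ 0, 0 ≤ m ≤ ℓ, and all real z ≥ 1, the following two-sided bound holds: (z-1)^ℓ ≤ √π·(ℓ-m)!·P_ℓ^m(z) / (2^ℓ·Γ(ℓ+1/2)) ≤ (z+1)^ℓ, where P_ℓ^m(z) = ((ℓ+m)!/(2^ℓ ℓ!))·Σ_{k=0}^{ℓ-m} C(ℓ,k)·C(ℓ,m+k)·(z-1)^{ℓ-m/2-k}·(z+1)^{m/2+k}. -/

import Mathlib

open Finset Real
open scoped Nat

/-!
Each summand of `P_ℓ^m(z)` carries `(z-1)^(ℓ-m/2-k) (z+1)^(m/2+k)`, whose exponents are nonnegative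
and add up to `ℓ`, so it lies between `(z-1)^ℓ` and `(z+1)^ℓ`. By Vandermonde the weights
`C(ℓ,k) C(ℓ,m+k)` sum to `C(2ℓ,ℓ+m)`, and `Γ(ℓ+1/2) = √π (2ℓ)! / (4^ℓ ℓ!)` shows that the
normalising constant in front of the sum is exactly `1 / C(2ℓ,ℓ+m)`.
-/

theorem Nat.sum_range_choose_mul_choose_add (a b m : ℕ) (hm : m ≤ b) :
    ∑ k ∈ range (b - m + 1), a.choose k * b.choose (m + k) = (a + b).choose (a + m) := by
  rw [Nat.choose_symm_of_eq_add (by omega : a + b = (a + m) + (b - m)), Nat.add_choose_eq,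
    Nat.sum_antidiagonal_eq_sum_range_succ_mk]
  refine sum_congr rfl fun k hk => ?_
  rw [Nat.choose_symm_of_eq_add (by simp at hk; omega : b = (m + k) + (b - m - k))]

theorem Nat.factorial_two_mul_eq (n : ℕ) : (2 * n)! = 2 ^ n * n ! * (2 * n - 1)‼ := by
  cases n with
  | zero => rfl
  | succ n =>
    rw [← Nat.doubleFactorial_two_mul, show 2 * (n + 1) = 2 * n + 1 + 1 by ring,
      Nat.factorial_eq_mul_doubleFactorial]
    rfl

theorem Real.two_pow_mul_Gamma_nat_add_half (n : ℕ) :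
    2 ^ n * n ! * (2 ^ n * Gamma (n + 1 / 2)) = √π * (2 * n)! := by
  rw [Gamma_nat_add_half, Nat.factorial_two_mul_eq]
  push_cast
  field_simp

theorem Real.rpow_add_le_rpow_mul_rpow {a b p q : ℝ} (ha : 0 ≤ a) (hab : a ≤ b) (hp : 0 ≤ p)
    (hq : 0 ≤ q) : a ^ (p + q) ≤ a ^ p * b ^ q := by
  rw [rpow_add_of_nonneg ha hp hq]
  gcongr

theorem Real.rpow_mul_rpow_le_rpow_add {a b p q : ℝ} (ha : 0 ≤ a) (hab : a ≤ b) (hp : 0 ≤ p)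
    (hq : 0 ≤ q) : a ^ p * b ^ q ≤ b ^ (p + q) := by
  rw [rpow_add_of_nonneg (ha.trans hab) hp hq]
  gcongr
  exact rpow_nonneg (ha.trans hab) q

/-- The sum in `P_ℓ^m(z)`, without the prefactor `(ℓ+m)! / (2^ℓ ℓ!)`. -/
noncomputable def assocLegendreSum (ℓ m : ℕ) (z : ℝ) : ℝ :=
  ∑ k ∈ range (ℓ - m + 1), (ℓ.choose k : ℝ) * (ℓ.choose (m + k) : ℝ) *
    (z - 1) ^ ((ℓ : ℝ) - (m : ℝ) / 2 - (k : ℝ)) * (z + 1) ^ ((m : ℝ) / 2 + (k : ℝ))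

theorem assocLegendreSum_mem_Icc {ℓ m : ℕ} (hm : m ≤ ℓ) {z : ℝ} (hz : 1 ≤ z) :
    assocLegendreSum ℓ m z ∈
      Set.Icc ((2 * ℓ).choose (ℓ + m) * (z - 1) ^ ℓ) ((2 * ℓ).choose (ℓ + m) * (z + 1) ^ ℓ) := by
  have hterm : ∀ k ∈ range (ℓ - m + 1),
      (z - 1) ^ ℓ ≤ (z - 1) ^ ((ℓ : ℝ) - m / 2 - k) * (z + 1) ^ ((m : ℝ) / 2 + k) ∧
      (z - 1) ^ ((ℓ : ℝ) - m / 2 - k) * (z + 1) ^ ((m : ℝ) / 2 + k) ≤ (z + 1) ^ ℓ := by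
    intro k hk
    have hkm : (k : ℝ) + m ≤ ℓ := by exact_mod_cast (by simp at hk; omega : k + m ≤ ℓ)
    have hp : 0 ≤ (ℓ : ℝ) - m / 2 - k := by linarith [(m.cast_nonneg : (0 : ℝ) ≤ m)]
    have hq : 0 ≤ (m : ℝ) / 2 + k := by positivity
    have hpq : (ℓ : ℝ) - m / 2 - k + (m / 2 + k) = ℓ := by ring
    have hz₁ : 0 ≤ z - 1 := by linarith
    have hz₂ : z - 1 ≤ z + 1 := by linarith
    have hlow := rpow_add_le_rpow_mul_rpow hz₁ hz₂ hp hq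
    have hupp := rpow_mul_rpow_le_rpow_add hz₁ hz₂ hp hq
    rw [hpq, rpow_natCast] at hlow hupp
    exact ⟨hlow, hupp⟩
  have hvand : ((2 * ℓ).choose (ℓ + m) : ℝ) =
      ∑ k ∈ range (ℓ - m + 1), (ℓ.choose k : ℝ) * ℓ.choose (m + k) := by
    rw [two_mul]
    exact_mod_cast (Nat.sum_range_choose_mul_choose_add ℓ ℓ m hm).symm
  rw [hvand, sum_mul, sum_mul]
  constructor <;> refine sum_le_sum fun k hk => ?_ <;> rw [mul_assoc _ ((z - 1) ^ _)]
  · exact mul_le_mul_of_nonneg_left (hterm k hk).1 (by positivity)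
  · exact mul_le_mul_of_nonneg_left (hterm k hk).2 (by positivity)

theorem sqrt_pi_mul_factorial_mul_div_eq_div_choose {ℓ m : ℕ} (hm : m ≤ ℓ) (S : ℝ) :
    √π * (ℓ - m)! * ((ℓ + m)! / (2 ^ ℓ * ℓ !) * S) / (2 ^ ℓ * Gamma (ℓ + 1 / 2)) =
      S / (2 * ℓ).choose (ℓ + m) := by
  have hΓ := two_pow_mul_Gamma_nat_add_half ℓ
  rw [Nat.cast_choose ℝ (by omega : ℓ + m ≤ 2 * ℓ), show 2 * ℓ - (ℓ + m) = ℓ - m by omega]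
  have hΓpos : 0 < Gamma (ℓ + 1 / 2) := Gamma_pos_of_pos (by positivity)
  generalize Gamma (ℓ + 1 / 2) = G at hΓ hΓpos ⊢
  field_simp
  linear_combination -S * hΓ

theorem assoc_legendre_two_sided_bound (ℓ m : ℕ) (hm : m ≤ ℓ) (z : ℝ) (hz : 1 ≤ z) :
    (z - 1) ^ ℓ ≤
      Real.sqrt Real.pi * (Nat.factorial (ℓ - m) : ℝ) *
        (((Nat.factorial (ℓ + m) : ℝ) / (2 ^ ℓ * (Nat.factorial ℓ : ℝ))) *
          ∑ k ∈ range (ℓ - m + 1),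
            (Nat.choose ℓ k : ℝ) * (Nat.choose ℓ (m + k) : ℝ) *
              (z - 1) ^ ((ℓ : ℝ) - (m : ℝ) / 2 - (k : ℝ)) *
              (z + 1) ^ ((m : ℝ) / 2 + (k : ℝ))) /
        (2 ^ ℓ * Real.Gamma ((ℓ : ℝ) + 1 / 2)) ∧
    Real.sqrt Real.pi * (Nat.factorial (ℓ - m) : ℝ) *
        (((Nat.factorial (ℓ + m) : ℝ) / (2 ^ ℓ * (Nat.factorial ℓ : ℝ))) *
          ∑ k ∈ range (ℓ - m + 1),
            (Nat.choose ℓ k : ℝ) * (Nat.choose ℓ (m + k) : ℝ) *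
              (z - 1) ^ ((ℓ : ℝ) - (m : ℝ) / 2 - (k : ℝ)) *
              (z + 1) ^ ((m : ℝ) / 2 + (k : ℝ))) /
        (2 ^ ℓ * Real.Gamma ((ℓ : ℝ) + 1 / 2)) ≤ (z + 1) ^ ℓ := by
  have hC : (0 : ℝ) < (2 * ℓ).choose (ℓ + m) := by exact_mod_cast Nat.choose_pos (by omega)
  rw [sqrt_pi_mul_factorial_mul_div_eq_div_choose hm, le_div_iff₀' hC, div_le_iff₀' hC]
  exact assocLegendreSum_mem_Icc hm hz
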